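/- arXiv:2008.07396 — 5 statements merged into one kernel-verified Lean document; each statement's English description precedes it below -/
import Mathlib

section
/- Let c > 0 and let y, g : (0, ρ₀] → ℝ be continuous with y differentiable and ρ · y'(ρ) − c · y(ρ) = g(ρ) on (0, ρ₀]. If g(ρ) → G as ρ → 0⁺ for some G ∈ ℝ, then y(ρ) → −G/c as ρ → 0⁺, and consequently ρ · y'(ρ) → 0 as ρ → 0⁺. -/
open Set Filter Topology

/-!
For `ρ > 0`, `(ρ ^ (-c) * y)' = ρ ^ (-c - 1) * (ρ * y' - c * y)`. Hence if `ρ * y' - c * y ≥ m`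
on `(0, b]`, then `ρ ^ (-c) * (y + m / c)` is monotone there, which gives
`y a ≤ -m / c + a ^ c * K` for `a ∈ (0, b]` with `K` independent of `a`; since `a ^ c → 0`,
eventually `y < u` for every `u > -m / c`. Applying this to `y` and `-y` with `m` close to `G`
squeezes `y` to `-G / c`, and then `ρ * y' = g + c * y → G - G = 0`.
-/

theorem hasDerivAt_rpow_neg_mul {c ρ v' : ℝ} {v : ℝ → ℝ} (hρ : 0 < ρ)
    (hv : HasDerivAt v v' ρ) :
    HasDerivAt (fun x => x ^ (-c) * v x) (ρ ^ (-c - 1) * (ρ * v' - c * v ρ)) ρ := by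
  refine ((Real.hasDerivAt_rpow_const (p := -c) (Or.inl hρ.ne')).mul hv).congr_deriv ?_
  rw [Real.rpow_sub_one hρ.ne']
  field_simp
  ring

theorem monotoneOn_rpow_neg_mul {c : ℝ} {v v' : ℝ → ℝ} {s : Set ℝ} (hs : Convex ℝ s)
    (hs₀ : s ⊆ Ioi 0) (hv : ∀ ρ ∈ s, HasDerivAt v (v' ρ) ρ)
    (hnonneg : ∀ ρ ∈ s, 0 ≤ ρ * v' ρ - c * v ρ) :
    MonotoneOn (fun ρ => ρ ^ (-c) * v ρ) s := by
  have hderiv (ρ) (hρ : ρ ∈ s) := hasDerivAt_rpow_neg_mul (c := c) (hs₀ hρ) (hv ρ hρ)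
  refine monotoneOn_of_hasDerivWithinAt_nonneg hs
    (fun ρ hρ => (hderiv ρ hρ).continuousAt.continuousWithinAt)
    (fun ρ hρ => (hderiv ρ (interior_subset hρ)).hasDerivWithinAt) fun ρ hρ => ?_
  have hρ := interior_subset hρ
  exact mul_nonneg (Real.rpow_nonneg (le_of_lt (hs₀ hρ)) _) (hnonneg ρ hρ)

theorem eventually_lt_of_le_mul_deriv_sub {c m u : ℝ} {y y' : ℝ → ℝ} (hc : 0 < c)
    (hy : ∀ᶠ ρ in 𝓝[>] 0, HasDerivAt y (y' ρ) ρ)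
    (hm : ∀ᶠ ρ in 𝓝[>] 0, m ≤ ρ * y' ρ - c * y ρ) (hu : -m / c < u) :
    ∀ᶠ ρ in 𝓝[>] 0, y ρ < u := by
  obtain ⟨b, hb₀, hb⟩ := mem_nhdsGT_iff_exists_Ioc_subset.1 (hy.and hm)
  have hmono : MonotoneOn (fun ρ => ρ ^ (-c) * (y ρ + m / c)) (Ioc 0 b) :=
    monotoneOn_rpow_neg_mul (convex_Ioc 0 b) Ioc_subset_Ioi_self
      (fun ρ hρ => (hb hρ).1.add_const _) fun ρ hρ => by
        have := (hb hρ).2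
        field_simp
        linarith
  set K := b ^ (-c) * (y b + m / c)
  have hbound : ∀ a ∈ Ioc 0 b, y a ≤ -m / c + a ^ c * K := by
    intro a ha
    have hle : a ^ (-c) * (y a + m / c) ≤ K := hmono ha (right_mem_Ioc.2 hb₀) ha.2
    have hpos : 0 < a ^ c := Real.rpow_pos_of_pos ha.1 c
    rw [Real.rpow_neg ha.1.le, inv_mul_le_iff₀ hpos] at hle
    linarith [neg_div c m]
  have hlim : Tendsto (fun a : ℝ => -m / c + a ^ c * K) (𝓝[>] 0) (𝓝 (-m / c)) := by
    have : ContinuousAt (fun a : ℝ => -m / c + a ^ c * K) 0 := by fun_prop (disch := positivity)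
    simpa [Real.zero_rpow hc.ne'] using this.tendsto.mono_left nhdsWithin_le_nhds
  filter_upwards [hlim.eventually_lt_const hu, Ioc_mem_nhdsGT hb₀] with a hlt ha
    using (hbound a ha).trans_lt hlt

theorem tendsto_nhdsGT_zero_of_tendsto_mul_deriv_sub {c G : ℝ} {y y' : ℝ → ℝ} (hc : 0 < c)
    (hy : ∀ᶠ ρ in 𝓝[>] 0, HasDerivAt y (y' ρ) ρ)
    (hG : Tendsto (fun ρ => ρ * y' ρ - c * y ρ) (𝓝[>] 0) (𝓝 G)) :
    Tendsto y (𝓝[>] 0) (𝓝 (-G / c)) := by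
  refine tendsto_order.2 ⟨fun l hl => ?_, fun u hu => ?_⟩
  · obtain ⟨M, hGM, hMl⟩ := exists_between (show G < -c * l by
      linarith [(lt_div_iff₀ hc).1 hl])
    have hneg := eventually_lt_of_le_mul_deriv_sub (m := -M) (u := -l) (y := fun ρ => -y ρ) hc
      (hy.mono fun ρ h => h.neg) ((tendsto_order.1 hG).2 M hGM |>.mono fun ρ h => by linarith)
      (by rw [neg_neg, div_lt_iff₀ hc]; linarith)
    exact hneg.mono fun ρ h => by linarith
  · obtain ⟨m, hum, hmG⟩ := exists_between (show -c * u < G by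
      linarith [(div_lt_iff₀ hc).1 hu])
    exact eventually_lt_of_le_mul_deriv_sub hc hy
      ((tendsto_order.1 hG).1 m hmG |>.mono fun ρ h => h.le)
      (by rw [neg_div, neg_lt, lt_div_iff₀ hc]; linarith)

theorem ode_limit_positive_general (ρ₀ c G : ℝ) (hρ₀ : 0 < ρ₀) (hc : 0 < c)
    (y y' g : ℝ → ℝ)
    (hy : ∀ ρ ∈ Set.Ioc (0:ℝ) ρ₀, HasDerivAt y (y' ρ) ρ)
    (hode : ∀ ρ ∈ Set.Ioc (0:ℝ) ρ₀, ρ * y' ρ - c * y ρ = g ρ)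
    (hg : Tendsto g (𝓝[>] (0:ℝ)) (𝓝 G)) :
    Tendsto y (𝓝[>] (0:ℝ)) (𝓝 (-G / c)) ∧
      Tendsto (fun ρ => ρ * y' ρ) (𝓝[>] (0:ℝ)) (𝓝 0) := by
  have hnear : Ioc 0 ρ₀ ∈ 𝓝[>] (0:ℝ) := Ioc_mem_nhdsGT hρ₀
  have hlim : Tendsto y (𝓝[>] 0) (𝓝 (-G / c)) :=
    tendsto_nhdsGT_zero_of_tendsto_mul_deriv_sub hc (mem_of_superset hnear hy)
      (hg.congr' (mem_of_superset hnear fun ρ hρ => (hode ρ hρ).symm))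
  have hsum : Tendsto (fun ρ => g ρ + c * y ρ) (𝓝[>] 0) (𝓝 0) := by
    simpa [mul_div_cancel₀ _ hc.ne'] using hg.add (hlim.const_mul c)
  refine ⟨hlim, hsum.congr' ?_⟩
  filter_upwards [hnear] with ρ hρ
  rw [← hode ρ hρ]
  ring

theorem ode_limit_positive (ρ₀ c G : ℝ) (hρ₀ : 0 < ρ₀) (hc : 0 < c)
    (y y' g : ℝ → ℝ)
    (hgc : ContinuousOn g (Set.Ioc 0 ρ₀))
    (hy : ∀ ρ ∈ Set.Ioc (0:ℝ) ρ₀, HasDerivAt y (y' ρ) ρ)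
    (hode : ∀ ρ ∈ Set.Ioc (0:ℝ) ρ₀, ρ * y' ρ - c * y ρ = g ρ)
    (hg : Tendsto g (𝓝[>] (0:ℝ)) (𝓝 G)) :
    Tendsto y (𝓝[>] (0:ℝ)) (𝓝 (-G / c)) ∧
      Tendsto (fun ρ => ρ * y' ρ) (𝓝[>] (0:ℝ)) (𝓝 0) :=
  ode_limit_positive_general ρ₀ c G hρ₀ hc y y' g hy hode hg
end

section
/- Let c > 0 and let y, g : (0, ρ₀] → ℝ be continuous with y differentiable and ρ · y'(ρ) − c · y(ρ) = g(ρ) on (0, ρ₀]. Suppose g(ρ) → G as ρ → 0⁺ and ∫₀^{ρ₀} |g(σ) − G|/σ dσ < ∞. Then ∫₀^{ρ₀} |y(σ) + G/c|/σ dσ < ∞. -/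
open Set Filter MeasureTheory Topology

open scoped ENNReal

/-!
Put `z = y + G / c`, so that `ρ z' - c z = g - G`, and `φ ρ = z ρ * ρ ^ (-c)`, so that
`φ' = (g - G) ρ^(-c-1)`. The fundamental theorem of calculus on `[ρ, ρ₀]` gives
`|z ρ| / ρ ≤ ρ^(c-1) (|φ ρ₀| + ∫_ρ^ρ₀ |g σ - G| σ^(-c-1) dσ)`. Integrating over `ρ ∈ (0, ρ₀]`,
the first term is finite because `c > 0`, and after exchanging the order of integration,
`∫_0^σ ρ^(c-1) dρ = σ^c / c` turns the second one into `c⁻¹ ∫_0^ρ₀ |g σ - G| / σ dσ`.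
-/

theorem hasDerivAt_mul_rpow_neg {z : ℝ → ℝ} {z' ρ : ℝ} (c : ℝ) (hz : HasDerivAt z z' ρ)
    (hρ : 0 < ρ) :
    HasDerivAt (fun s => z s * s ^ (-c)) ((ρ * z' - c * z ρ) * ρ ^ (-c - 1)) ρ := by
  refine (hz.mul (Real.hasDerivAt_rpow_const (p := -c) (Or.inl hρ.ne'))).congr_deriv ?_
  rw [Real.rpow_sub_one hρ.ne']
  field_simp
  ring

theorem enorm_le_enorm_add_setLIntegral_of_hasDerivAt {E : Type*} [NormedAddCommGroup E]
    [NormedSpace ℝ E] [CompleteSpace E] {f f' : ℝ → E} {a b : ℝ} (hab : a ≤ b)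
    (hf : ∀ x ∈ Icc a b, HasDerivAt f (f' x) x) (hf' : IntervalIntegrable f' volume a b) :
    ‖f a‖ₑ ≤ ‖f b‖ₑ + ∫⁻ x in Ioc a b, ‖f' x‖ₑ := by
  have hFTC : f b - f a = ∫ x in Ioc a b, f' x := by
    rw [← intervalIntegral.integral_of_le hab,
      intervalIntegral.integral_eq_sub_of_hasDerivAt (uIcc_of_le hab ▸ hf) hf']
  calc ‖f a‖ₑ = ‖f b - (f b - f a)‖ₑ := by rw [sub_sub_cancel]
    _ ≤ ‖f b‖ₑ + ‖f b - f a‖ₑ := enorm_sub_le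
    _ ≤ ‖f b‖ₑ + ∫⁻ x in Ioc a b, ‖f' x‖ₑ := by
      rw [hFTC]
      gcongr
      exact enorm_integral_le_lintegral_enorm _

theorem setLIntegral_Ioo_rpow_sub_one {c σ : ℝ} (hc : 0 < c) (hσ : 0 ≤ σ) :
    ∫⁻ ρ in Ioo 0 σ, ENNReal.ofReal (ρ ^ (c - 1)) = ENNReal.ofReal (σ ^ c / c) := by
  have hint : IntegrableOn (fun ρ : ℝ => ρ ^ (c - 1)) (Ioc 0 σ) :=
    (intervalIntegral.intervalIntegrable_rpow' (by linarith)).1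
  rw [Measure.restrict_congr_set Ioo_ae_eq_Ioc, ← ofReal_integral_eq_lintegral_ofReal hint
    (ae_restrict_of_forall_mem measurableSet_Ioc fun ρ hρ => Real.rpow_nonneg hρ.1.le _),
    ← intervalIntegral.integral_of_le hσ, integral_rpow (Or.inl (by linarith)),
    sub_add_cancel, Real.zero_rpow hc.ne', sub_zero]

theorem setLIntegral_Ioc_rpow_mul_setLIntegral_Ioc {b c : ℝ} (hc : 0 < c) {f : ℝ → ℝ≥0∞}
    (hf : AEMeasurable f (volume.restrict (Ioc 0 b))) :
    ∫⁻ ρ in Ioc 0 b, ENNReal.ofReal (ρ ^ (c - 1)) * ∫⁻ σ in Ioc ρ b, f σ =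
      ∫⁻ σ in Ioc 0 b, ENNReal.ofReal (σ ^ c / c) * f σ := by
  set F : ℝ → ℝ → ℝ≥0∞ := fun ρ σ => ENNReal.ofReal (ρ ^ (c - 1)) * (Ioi ρ).indicator f σ
  have hF : AEMeasurable (Function.uncurry F)
      ((volume.restrict (Ioc 0 b)).prod (volume.restrict (Ioc 0 b))) := by
    have hF_eq : Function.uncurry F = fun p => ENNReal.ofReal (p.1 ^ (c - 1)) *
        {p : ℝ × ℝ | p.1 < p.2}.indicator (fun p => f p.2) p := by
      ext ⟨ρ, σ⟩
      simp only [Function.uncurry_apply_pair, F, indicator_apply, mem_Ioi, mem_ofPred_eq]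
    rw [hF_eq]
    exact (Measurable.aemeasurable (by fun_prop)).mul
      (hf.comp_snd.indicator (measurableSet_lt measurable_fst measurable_snd))
  calc ∫⁻ ρ in Ioc 0 b, ENNReal.ofReal (ρ ^ (c - 1)) * ∫⁻ σ in Ioc ρ b, f σ
      = ∫⁻ ρ in Ioc 0 b, ∫⁻ σ in Ioc 0 b, F ρ σ := by
        refine setLIntegral_congr_fun measurableSet_Ioc fun ρ hρ => ?_
        have hIoc : Ioi ρ ∩ Ioc 0 b = Ioc ρ b := by grind
        rw [lintegral_const_mul' _ _ ENNReal.ofReal_ne_top, lintegral_indicator measurableSet_Ioi,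
          Measure.restrict_restrict measurableSet_Ioi, hIoc]
    _ = ∫⁻ σ in Ioc 0 b, ∫⁻ ρ in Ioc 0 b, F ρ σ := lintegral_lintegral_swap hF
    _ = ∫⁻ σ in Ioc 0 b, ENNReal.ofReal (σ ^ c / c) * f σ := by
        refine setLIntegral_congr_fun measurableSet_Ioc fun σ hσ => ?_
        have hF_eq : ∀ ρ, F ρ σ =
            (Iio σ).indicator (fun ρ => ENNReal.ofReal (ρ ^ (c - 1))) ρ * f σ := by
          intro ρ
          by_cases h : ρ < σ <;> simp [F, indicator_apply, h]
        have hIoo : Iio σ ∩ Ioc 0 b = Ioo 0 σ := by grind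
        simp_rw [hF_eq]
        rw [lintegral_mul_const _ ((Measurable.ennreal_ofReal (by fun_prop)).indicator
            measurableSet_Iio), lintegral_indicator measurableSet_Iio,
          Measure.restrict_restrict measurableSet_Iio, hIoo,
          setLIntegral_Ioo_rpow_sub_one hc hσ.1.le]

theorem setLIntegral_abs_div_lt_top_of_mul_deriv_sub_mul {b c : ℝ} (hc : 0 < c)
    {z z' h : ℝ → ℝ} (hz : ∀ ρ ∈ Ioc 0 b, HasDerivAt z (z' ρ) ρ)
    (hode : ∀ ρ ∈ Ioc 0 b, ρ * z' ρ - c * z ρ = h ρ) (hh : ContinuousOn h (Ioc 0 b))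
    (hint : ∫⁻ σ in Ioc 0 b, ENNReal.ofReal (|h σ| / σ) < ⊤) :
    ∫⁻ σ in Ioc 0 b, ENNReal.ofReal (|z σ| / σ) < ⊤ := by
  set φ : ℝ → ℝ := fun s => z s * s ^ (-c)
  set φ' : ℝ → ℝ := fun s => h s * s ^ (-c - 1)
  have hφ : ∀ ρ ∈ Ioc 0 b, HasDerivAt φ (φ' ρ) ρ := fun ρ hρ => by
    simpa only [hode ρ hρ] using hasDerivAt_mul_rpow_neg c (hz ρ hρ) hρ.1
  have hφ'c : ContinuousOn φ' (Ioc 0 b) :=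
    hh.mul (continuousOn_id.rpow_const fun x hx => Or.inl hx.1.ne')
  have hpointwise : ∀ ρ ∈ Ioc 0 b, ENNReal.ofReal (|z ρ| / ρ) ≤
      ENNReal.ofReal (ρ ^ (c - 1)) * ‖φ b‖ₑ +
        ENNReal.ofReal (ρ ^ (c - 1)) * ∫⁻ σ in Ioc ρ b, ‖φ' σ‖ₑ := by
    intro ρ hρ
    have hsub : Icc ρ b ⊆ Ioc 0 b := fun x hx => ⟨hρ.1.trans_le hx.1, hx.2⟩
    have hzφ : |z ρ| / ρ = ρ ^ (c - 1) * |φ ρ| := by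
      rw [abs_mul, abs_of_pos (Real.rpow_pos_of_pos hρ.1 _), Real.rpow_sub_one hρ.1.ne',
        Real.rpow_neg hρ.1.le]
      field_simp [(Real.rpow_pos_of_pos hρ.1 c).ne']
    rw [hzφ, ENNReal.ofReal_mul (Real.rpow_nonneg hρ.1.le _), ← Real.enorm_eq_ofReal_abs,
      ← mul_add]
    gcongr
    exact enorm_le_enorm_add_setLIntegral_of_hasDerivAt hρ.2 (fun x hx => hφ x (hsub hx))
      ((hφ'c.mono hsub).intervalIntegrable_of_Icc hρ.2)
  have hweight : ∀ σ ∈ Ioc 0 b, ENNReal.ofReal (σ ^ c / c) * ‖φ' σ‖ₑ =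
      ENNReal.ofReal c⁻¹ * ENNReal.ofReal (|h σ| / σ) := by
    intro σ hσ
    rw [Real.enorm_eq_ofReal_abs,
      ← ENNReal.ofReal_mul (div_nonneg (Real.rpow_nonneg hσ.1.le _) hc.le),
      ← ENNReal.ofReal_mul (by positivity), abs_mul, abs_of_pos (Real.rpow_pos_of_pos hσ.1 _),
      Real.rpow_sub_one hσ.1.ne', Real.rpow_neg hσ.1.le]
    congr 1
    field_simp [(Real.rpow_pos_of_pos hσ.1 c).ne']
  have hrpow : ∫⁻ ρ in Ioc 0 b, ENNReal.ofReal (ρ ^ (c - 1)) < ⊤ :=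
    (intervalIntegral.intervalIntegrable_rpow' (by linarith)).1.lintegral_lt_top
  calc ∫⁻ σ in Ioc 0 b, ENNReal.ofReal (|z σ| / σ)
      ≤ ∫⁻ ρ in Ioc 0 b, (ENNReal.ofReal (ρ ^ (c - 1)) * ‖φ b‖ₑ +
          ENNReal.ofReal (ρ ^ (c - 1)) * ∫⁻ σ in Ioc ρ b, ‖φ' σ‖ₑ) :=
        setLIntegral_mono' measurableSet_Ioc hpointwise
    _ = (∫⁻ ρ in Ioc 0 b, ENNReal.ofReal (ρ ^ (c - 1))) * ‖φ b‖ₑ +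
          ENNReal.ofReal c⁻¹ * ∫⁻ σ in Ioc 0 b, ENNReal.ofReal (|h σ| / σ) := by
        rw [lintegral_add_left (by fun_prop), lintegral_mul_const _ (by fun_prop),
          setLIntegral_Ioc_rpow_mul_setLIntegral_Ioc hc
            (hφ'c.aemeasurable measurableSet_Ioc).enorm,
          setLIntegral_congr_fun measurableSet_Ioc hweight,
          lintegral_const_mul' _ _ ENNReal.ofReal_ne_top]
    _ < ⊤ := ENNReal.add_lt_top.2
      ⟨ENNReal.mul_lt_top hrpow enorm_lt_top, ENNReal.mul_lt_top ENNReal.ofReal_lt_top hint⟩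

theorem ode_limit_positive_rate_general (ρ₀ c G : ℝ) (hc : 0 < c)
    (y y' g : ℝ → ℝ)
    (hgc : ContinuousOn g (Set.Ioc 0 ρ₀))
    (hy : ∀ ρ ∈ Set.Ioc (0:ℝ) ρ₀, HasDerivAt y (y' ρ) ρ)
    (hode : ∀ ρ ∈ Set.Ioc (0:ℝ) ρ₀, ρ * y' ρ - c * y ρ = g ρ)
    (hgint : ∫⁻ σ in Set.Ioc (0:ℝ) ρ₀, ENNReal.ofReal (|g σ - G| / σ) < ⊤) :
    ∫⁻ σ in Set.Ioc (0:ℝ) ρ₀, ENNReal.ofReal (|y σ + G / c| / σ) < ⊤ :=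
  setLIntegral_abs_div_lt_top_of_mul_deriv_sub_mul (h := fun σ => g σ - G) hc
    (fun ρ hρ => (hy ρ hρ).add_const _)
    (fun ρ hρ => by rw [← hode ρ hρ]; field_simp; ring)
    (hgc.sub continuousOn_const) hgint

theorem ode_limit_positive_rate (ρ₀ c G : ℝ) (hρ₀ : 0 < ρ₀) (hc : 0 < c)
    (y y' g : ℝ → ℝ)
    (hgc : ContinuousOn g (Set.Ioc 0 ρ₀))
    (hy : ∀ ρ ∈ Set.Ioc (0:ℝ) ρ₀, HasDerivAt y (y' ρ) ρ)
    (hode : ∀ ρ ∈ Set.Ioc (0:ℝ) ρ₀, ρ * y' ρ - c * y ρ = g ρ)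
    (hg : Tendsto g (𝓝[>] (0:ℝ)) (𝓝 G))
    (hgint : ∫⁻ σ in Set.Ioc (0:ℝ) ρ₀, ENNReal.ofReal (|g σ - G| / σ) < ⊤) :
    ∫⁻ σ in Set.Ioc (0:ℝ) ρ₀, ENNReal.ofReal (|y σ + G / c| / σ) < ⊤ :=
  ode_limit_positive_rate_general ρ₀ c G hc y y' g hgc hy hode hgint
end

section
/- Let y : (0, ρ₀] → ℝ be differentiable with continuous derivative, and suppose there is G ∈ ℝ such that ρ · y'(ρ) → G as ρ → 0⁺ and ∫₀^{ρ₀} |σ · y'(σ) − G|/σ dσ < ∞. Then there exists H ∈ ℝ such that y(ρ) − G · log ρ → H as ρ → 0⁺. -/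
open Set Filter MeasureTheory Topology

/-!
The derivative of `ρ ↦ y ρ - G log ρ` is `(ρ y' ρ - G) / ρ`, which is integrable on `(0, ρ₀]` by
hypothesis. By the fundamental theorem of calculus the function is therefore `y ρ₀ - G log ρ₀`
minus the integral of an integrable function over `[ρ, ρ₀]`, and such an integral converges as
`ρ → 0⁺`.
-/

section

variable {E : Type*} [NormedAddCommGroup E] [NormedSpace ℝ E] [CompleteSpace E]

theorem aestronglyMeasurable_of_forall_hasDerivAt {f f' : ℝ → E} {s : Set ℝ} (μ : Measure ℝ)
    (hs : MeasurableSet s) (hderiv : ∀ x ∈ s, HasDerivAt f (f' x) x) :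
    AEStronglyMeasurable f' (μ.restrict s) :=
  (aestronglyMeasurable_deriv f _).congr <|
    (ae_restrict_mem hs).mono fun x hx => (hderiv x hx).deriv

theorem tendsto_nhdsGT_of_hasDerivAt_of_integrableOn_Ioc {f f' : ℝ → E} {a b : ℝ} (hab : a < b)
    (hderiv : ∀ x ∈ Ioc a b, HasDerivAt f (f' x) x) (hint : IntegrableOn f' (Ioc a b)) :
    Tendsto f (𝓝[>] a) (𝓝 (f b - ∫ x in a..b, f' x)) := by
  have hint_Icc : IntegrableOn f' (uIcc a b) := by
    rwa [uIcc_of_le hab.le, integrableOn_Icc_iff_integrableOn_Ioc]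
  have hprimitive : Tendsto (fun x => ∫ t in x..b, f' t) (𝓝[>] a) (𝓝 (∫ t in a..b, f' t)) := by
    have := (intervalIntegral.continuousOn_primitive_interval_left hint_Icc a left_mem_uIcc).mono
      (Ioc_subset_Icc_self.trans_eq (uIcc_of_le hab.le).symm)
    rwa [ContinuousWithinAt, nhdsWithin_Ioc_eq_nhdsGT hab] at this
  refine (hprimitive.const_sub (f b)).congr' ?_
  filter_upwards [Ioc_mem_nhdsGT hab] with x hx
  have hsub : uIcc x b ⊆ Ioc a b := by
    rw [uIcc_of_le hx.2]
    exact fun t ht => ⟨hx.1.trans_le ht.1, ht.2⟩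
  rw [intervalIntegral.integral_eq_sub_of_hasDerivAt (fun t ht => hderiv t (hsub ht))
    ((hint.mono_set hsub).intervalIntegrable), sub_sub_cancel]

end

theorem ode_limit_zero_general (ρ₀ G : ℝ) (hρ₀ : 0 < ρ₀)
    (y y' : ℝ → ℝ)
    (hy : ∀ ρ ∈ Set.Ioc (0:ℝ) ρ₀, HasDerivAt y (y' ρ) ρ)
    (hint : ∫⁻ σ in Set.Ioc (0:ℝ) ρ₀, ENNReal.ofReal (|σ * y' σ - G| / σ) < ⊤) :
    ∃ H : ℝ, Tendsto (fun ρ => y ρ - G * Real.log ρ) (𝓝[>] (0:ℝ)) (𝓝 H) := by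
  have hderiv : ∀ σ ∈ Ioc (0:ℝ) ρ₀,
      HasDerivAt (fun ρ => y ρ - G * Real.log ρ) (y' σ - G / σ) σ := fun σ hσ => by
    simpa [div_eq_mul_inv] using (hy σ hσ).fun_sub ((Real.hasDerivAt_log hσ.1.ne').const_mul G)
  have hnorm : ∀ σ ∈ Ioc (0:ℝ) ρ₀, ‖y' σ - G / σ‖ = |σ * y' σ - G| / σ := fun σ hσ => by
    rw [Real.norm_eq_abs, ← abs_of_pos hσ.1, ← abs_div, abs_of_pos hσ.1, sub_div,
      mul_div_cancel_left₀ _ hσ.1.ne']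
  have hintegrable : IntegrableOn (fun σ => y' σ - G / σ) (Ioc 0 ρ₀) := by
    refine ⟨aestronglyMeasurable_of_forall_hasDerivAt _ measurableSet_Ioc hderiv, ?_⟩
    rwa [hasFiniteIntegral_iff_norm, setLIntegral_congr_fun measurableSet_Ioc fun σ hσ => by rw [hnorm σ hσ]]
  exact ⟨_, tendsto_nhdsGT_of_hasDerivAt_of_integrableOn_Ioc hρ₀ hderiv hintegrable⟩

theorem ode_limit_zero (ρ₀ G : ℝ) (hρ₀ : 0 < ρ₀)
    (y y' : ℝ → ℝ)
    (hy : ∀ ρ ∈ Set.Ioc (0:ℝ) ρ₀, HasDerivAt y (y' ρ) ρ)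
    (hy'c : ContinuousOn y' (Set.Ioc 0 ρ₀))
    (hlim : Tendsto (fun ρ => ρ * y' ρ) (𝓝[>] (0:ℝ)) (𝓝 G))
    (hint : ∫⁻ σ in Set.Ioc (0:ℝ) ρ₀, ENNReal.ofReal (|σ * y' σ - G| / σ) < ⊤) :
    ∃ H : ℝ, Tendsto (fun ρ => y ρ - G * Real.log ρ) (𝓝[>] (0:ℝ)) (𝓝 H) :=
  ode_limit_zero_general ρ₀ G hρ₀ y y' hy hint
end

section
/- Let n ≥ 1 and let f : (0, ρ₀] → ℝ be n times differentiable. Suppose there are a₀, …, a_{n−1}, b, a ∈ ℝ such that f^{(k)}(ρ) → k! a_k as ρ → 0⁺ for 0 ≤ k < n, and f^{(n)}(ρ) − n! b log ρ → n! a as ρ → 0⁺. Then f(ρ) = Σ_{k=0}^{n−1} a_k ρ^k + b ρ^n log ρ + (a − Hₙ b) ρ^n + r(ρ) ρ^n with r(ρ) → 0 as ρ → 0⁺, where Hₙ = 1 + 1/2 + ⋯ + 1/n. -/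
/-!
Subtracting `b ρⁿ (log ρ - Hₙ)` from `f` removes the logarithmic singularity of `f⁽ⁿ⁾`:
`ρᵐ (log ρ - Hₘ)` has derivative `m ρᵐ⁻¹ (log ρ - Hₘ₋₁)`, so the `n`-th derivative of
`ρⁿ (log ρ - Hₙ)` is `n! log ρ`, while its lower derivatives tend to `0` at `0⁺`. The difference
then has derivatives up to order `n` with finite limits at `0⁺`, and `n` applications of
L'Hôpital's rule give its Taylor expansion with remainder `o(ρⁿ)`.
-/

open Set Filter Topology Polynomial
open scoped Nat

theorem tendsto_div_pow_nhdsGT_zero_of_hasDerivAt {m : ℕ} {H : ℕ → ℝ → ℝ}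
    (hderiv : ∀ k < m, ∀ᶠ x in 𝓝[>] 0, HasDerivAt (H k) (H (k + 1) x) x)
    (hlim : ∀ k ≤ m, Tendsto (H k) (𝓝[>] 0) (𝓝 0)) :
    Tendsto (fun x => H 0 x / x ^ m) (𝓝[>] 0) (𝓝 0) := by
  induction m generalizing H with
  | zero => simpa using hlim 0 le_rfl
  | succ m ih =>
    have hshift : Tendsto (fun x => H 1 x / x ^ m) (𝓝[>] 0) (𝓝 0) :=
      ih (H := fun k => H (k + 1)) (fun k hk => hderiv (k + 1) (by omega))
        (fun k hk => hlim (k + 1) (by omega))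
    have hpow : Tendsto (fun x : ℝ => x ^ (m + 1)) (𝓝[>] 0) (𝓝 0) :=
      ((continuous_pow _).tendsto' 0 0 (by simp)).mono_left nhdsWithin_le_nhds
    refine HasDerivAt.lhopital_zero_nhdsGT (hderiv 0 (by omega))
      (Eventually.of_forall fun x => by simpa using hasDerivAt_pow (m + 1) x)
      (eventually_mem_nhdsWithin.mono fun x (hx : 0 < x) => by positivity)
      (hlim 0 (by omega)) hpow ?_
    simpa [div_div, mul_comm] using hshift.div_const ((m : ℝ) + 1)

theorem tendsto_sub_eval_div_pow_nhdsGT_zero {N : ℕ} {D : ℕ → ℝ → ℝ} (p : ℝ[X])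
    (hderiv : ∀ k < N, ∀ᶠ x in 𝓝[>] 0, HasDerivAt (D k) (D (k + 1) x) x)
    (hlim : ∀ k ≤ N, Tendsto (D k) (𝓝[>] 0) (𝓝 (k ! * p.coeff k))) :
    Tendsto (fun x => (D 0 x - p.eval x) / x ^ N) (𝓝[>] 0) (𝓝 0) := by
  refine tendsto_div_pow_nhdsGT_zero_of_hasDerivAt
    (H := fun k x => D k x - (derivative^[k] p).eval x) (fun k hk => ?_) (fun k hk => ?_)
  · refine (hderiv k hk).mono fun x hx => ?_
    rw [Function.iterate_succ_apply']
    exact hx.sub (Polynomial.hasDerivAt _ x)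
  · have heval : (derivative^[k] p).eval 0 = k ! * p.coeff k := by
      rw [← coeff_zero_eq_eval_zero, coeff_iterate_derivative, zero_add,
        Nat.descFactorial_self, nsmul_eq_mul]
    have hpoly := ((Polynomial.continuous (derivative^[k] p)).tendsto 0).mono_left
      (nhdsWithin_le_nhds (s := Ioi 0))
    simpa [heval] using (hlim k hk).sub hpoly

noncomputable def powLog (m : ℕ) (x : ℝ) : ℝ := x ^ m * (Real.log x - harmonic m)

theorem hasDerivAt_powLog_succ (m : ℕ) {x : ℝ} (hx : x ≠ 0) :
    HasDerivAt (powLog (m + 1)) ((m + 1) * powLog m x) x := by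
  refine ((hasDerivAt_pow (m + 1) x).fun_mul
    ((Real.hasDerivAt_log hx).sub_const (harmonic (m + 1) : ℝ))).congr_deriv ?_
  simp only [powLog, harmonic_succ]
  push_cast
  field_simp
  ring

theorem tendsto_powLog_nhdsGT_zero {m : ℕ} (hm : m ≠ 0) :
    Tendsto (powLog m) (𝓝[>] 0) (𝓝 0) := by
  have hlog : Tendsto (fun x : ℝ => Real.log x * x ^ m) (𝓝[>] 0) (𝓝 0) := by
    simpa using tendsto_log_mul_rpow_nhdsGT_zero (r := m) (by positivity)
  have hpow : Tendsto (fun x : ℝ => x ^ m) (𝓝[>] 0) (𝓝 0) :=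
    ((continuous_pow _).tendsto' 0 0 (by simp [hm])).mono_left nhdsWithin_le_nhds
  show Tendsto (fun x : ℝ => x ^ m * (Real.log x - harmonic m)) _ _
  simpa [mul_sub, mul_comm] using hlog.sub (hpow.mul_const (harmonic m : ℝ))

theorem hasDerivAt_descFactorial_mul_powLog {n k : ℕ} (hk : k < n) {x : ℝ} (hx : x ≠ 0) :
    HasDerivAt (fun y => n.descFactorial k * powLog (n - k) y)
      (n.descFactorial (k + 1) * powLog (n - (k + 1)) x) x := by
  obtain ⟨m, hm⟩ : ∃ m, n - k = m + 1 := ⟨n - k - 1, by omega⟩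
  have hm' : n - (k + 1) = m := by omega
  rw [hm, hm', Nat.descFactorial_succ, hm]
  refine ((hasDerivAt_powLog_succ m hx).const_mul (n.descFactorial k : ℝ)).congr_deriv ?_
  push_cast
  ring

theorem polyhomogeneous_expansion_general (ρ₀ : ℝ) (hρ₀ : 0 < ρ₀) (n : ℕ)
    (D : ℕ → ℝ → ℝ) (f : ℝ → ℝ) (a' : ℕ → ℝ) (b a : ℝ)
    (hD0 : D 0 = f)
    (hderiv : ∀ k < n, ∀ ρ ∈ Set.Ioc (0:ℝ) ρ₀, HasDerivAt (D k) (D (k+1) ρ) ρ)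
    (hlim : ∀ k < n, Tendsto (D k) (𝓝[>] (0:ℝ)) (𝓝 ((Nat.factorial k : ℝ) * a' k)))
    (hlog : Tendsto (fun ρ => D n ρ - (Nat.factorial n : ℝ) * b * Real.log ρ)
      (𝓝[>] (0:ℝ)) (𝓝 ((Nat.factorial n : ℝ) * a))) :
    ∃ r : ℝ → ℝ, Tendsto r (𝓝[>] (0:ℝ)) (𝓝 0) ∧
      ∀ ρ ∈ Set.Ioc (0:ℝ) ρ₀,
        f ρ = (∑ k ∈ Finset.range n, a' k * ρ ^ k)
          + b * ρ ^ n * Real.log ρ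
          + (a - (∑ k ∈ Finset.range n, (1 : ℝ) / (k + 1)) * b) * ρ ^ n
          + r ρ * ρ ^ n := by
  let p : ℝ[X] := ∑ k ∈ Finset.range n, C (a' k) * X ^ k + C a * X ^ n
  have hcoeff_lt : ∀ k < n, p.coeff k = a' k := fun k hk => by
    simp [p, coeff_X_pow, hk, hk.ne]
  have hcoeff_n : p.coeff n = a := by simp [p, coeff_X_pow]
  let E : ℕ → ℝ → ℝ := fun k x => D k x - b * (n.descFactorial k * powLog (n - k) x)
  have hE : Tendsto (fun x => (E 0 x - p.eval x) / x ^ n) (𝓝[>] 0) (𝓝 0) := by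
    refine tendsto_sub_eval_div_pow_nhdsGT_zero p (fun k hk => ?_) (fun k hk => ?_)
    · filter_upwards [Ioc_mem_nhdsGT hρ₀] with x hx
      exact (hderiv k hk x hx).sub
        ((hasDerivAt_descFactorial_mul_powLog hk hx.1.ne').const_mul b)
    · rcases hk.lt_or_eq with hk | rfl
      · have h := (hlim k hk).sub ((tendsto_powLog_nhdsGT_zero (m := n - k) (by omega)).const_mul
          (b * n.descFactorial k))
        rw [mul_zero, sub_zero, ← hcoeff_lt k hk] at h
        exact h.congr fun x => by simp only [E]; ring
      · rw [hcoeff_n]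
        refine hlog.congr fun x => ?_
        simp only [E, powLog, Nat.sub_self, pow_zero, harmonic_zero, Nat.descFactorial_self]
        push_cast
        ring
  refine ⟨fun x => (E 0 x - p.eval x) / x ^ n, hE, fun x hx => ?_⟩
  simp only [E, p, powLog, hD0, harmonic, one_div, Nat.descFactorial_zero, Nat.sub_zero,
    div_mul_cancel₀ _ (pow_ne_zero n hx.1.ne'), eval_add, eval_finsetSum, eval_mul, eval_C,
    eval_pow, eval_X]
  push_cast
  ring

theorem polyhomogeneous_expansion (ρ₀ : ℝ) (hρ₀ : 0 < ρ₀) (n : ℕ) (hn : 1 ≤ n)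
    (D : ℕ → ℝ → ℝ) (f : ℝ → ℝ) (a' : ℕ → ℝ) (b a : ℝ)
    (hD0 : D 0 = f)
    (hderiv : ∀ k < n, ∀ ρ ∈ Set.Ioc (0:ℝ) ρ₀, HasDerivAt (D k) (D (k+1) ρ) ρ)
    (hlim : ∀ k < n, Tendsto (D k) (𝓝[>] (0:ℝ)) (𝓝 ((Nat.factorial k : ℝ) * a' k)))
    (hlog : Tendsto (fun ρ => D n ρ - (Nat.factorial n : ℝ) * b * Real.log ρ)
      (𝓝[>] (0:ℝ)) (𝓝 ((Nat.factorial n : ℝ) * a))) :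
    ∃ r : ℝ → ℝ, Tendsto r (𝓝[>] (0:ℝ)) (𝓝 0) ∧
      ∀ ρ ∈ Set.Ioc (0:ℝ) ρ₀,
        f ρ = (∑ k ∈ Finset.range n, a' k * ρ ^ k)
          + b * ρ ^ n * Real.log ρ
          + (a - (∑ k ∈ Finset.range n, (1 : ℝ) / (k + 1)) * b) * ρ ^ n
          + r ρ * ρ ^ n :=
  polyhomogeneous_expansion_general ρ₀ hρ₀ n D f a' b a hD0 hderiv hlim hlog
end

section
/- Fix M ∈ ℝ and let r > 0 be large enough that r⁴ + r² − M > 0 and 1 − (1+4M)ρ⁴/16 > 0, where ρ > 0 is defined by ρ² = 4 / ((2r² + 1) + 2√(r⁴ + r² − M)). Then: (i) r² = ρ^{−2} (1 − ρ²/2 + (1+4M)ρ⁴/16), and (ii) r² + 1 − M r^{−2} = ρ^{−2} (1 − (1+4M)ρ⁴/16)² · (1 − ρ²/2 + (1+4M)ρ⁴/16)^{−1}. -/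
/-!
Set `s = √(r⁴ + r² - M)`. The defining relation of `ρ` reads `2ρ²s = 4 - 2ρ²r² - ρ²`; squaring it
eliminates `s`, and what remains is linear in `r²`, which gives (i). Then (ii) is the identity
`ρ⁴ (r⁴ + r² - M) = (1 - (1 + 4M)ρ⁴/16)²`, a polynomial consequence of (i), divided by `ρ² · ρ²r²`.
-/

theorem sq_mul_sq_eq_of_sq_mul_add_two_mul_eq_four {M r ρ s : ℝ}
    (hs : s ^ 2 = r ^ 4 + r ^ 2 - M) (hρ : ρ ^ 2 * ((2 * r ^ 2 + 1) + 2 * s) = 4) :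
    ρ ^ 2 * r ^ 2 = 1 - ρ ^ 2 / 2 + (1 + 4 * M) * ρ ^ 4 / 16 := by
  have hlin : 2 * ρ ^ 2 * s = 4 - 2 * ρ ^ 2 * r ^ 2 - ρ ^ 2 := by linear_combination hρ
  linear_combination (1 / 16) * (2 * ρ ^ 2 * s + 4 - 2 * ρ ^ 2 * r ^ 2 - ρ ^ 2) * hlin
    - (ρ ^ 4 / 4) * hs

theorem pow_four_mul_lapse_eq_sq_of_sq_mul_sq_eq {M r ρ : ℝ}
    (h : ρ ^ 2 * r ^ 2 = 1 - ρ ^ 2 / 2 + (1 + 4 * M) * ρ ^ 4 / 16) :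
    ρ ^ 4 * (r ^ 4 + r ^ 2 - M) = (1 - (1 + 4 * M) * ρ ^ 4 / 16) ^ 2 := by
  linear_combination (ρ ^ 2 * r ^ 2 + (1 - ρ ^ 2 / 2 + (1 + 4 * M) * ρ ^ 4 / 16) + ρ ^ 2) * h

theorem schw_ads_fg_coordinate_n4_general (M r ρ : ℝ) (hr : 0 < r)
    (h1 : 0 < r ^ 4 + r ^ 2 - M)
    (hρdef : ρ ^ 2 = 4 / ((2 * r ^ 2 + 1) + 2 * Real.sqrt (r ^ 4 + r ^ 2 - M))) :
    r ^ 2 = (1 / ρ ^ 2) * (1 - ρ ^ 2 / 2 + (1 + 4 * M) * ρ ^ 4 / 16) ∧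
    r ^ 2 + 1 - M / r ^ 2
      = (1 / ρ ^ 2) * (1 - (1 + 4 * M) * ρ ^ 4 / 16) ^ 2 *
          (1 - ρ ^ 2 / 2 + (1 + 4 * M) * ρ ^ 4 / 16)⁻¹ := by
  have hden : 0 < (2 * r ^ 2 + 1) + 2 * Real.sqrt (r ^ 4 + r ^ 2 - M) := by positivity
  have hρ : ρ ≠ 0 := (pow_ne_zero_iff two_ne_zero).mp (by rw [hρdef]; positivity)
  have hA := sq_mul_sq_eq_of_sq_mul_add_two_mul_eq_four (Real.sq_sqrt h1.le)
    (by rw [hρdef]; field_simp)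
  have hB := pow_four_mul_lapse_eq_sq_of_sq_mul_sq_eq hA
  refine ⟨by rw [← hA]; field_simp, ?_⟩
  rw [← hA, ← hB]
  field_simp

theorem schw_ads_fg_coordinate_n4 (M r ρ : ℝ) (hr : 0 < r) (hρ : 0 < ρ)
    (h1 : 0 < r ^ 4 + r ^ 2 - M)
    (hρdef : ρ ^ 2 = 4 / ((2 * r ^ 2 + 1) + 2 * Real.sqrt (r ^ 4 + r ^ 2 - M)))
    (h2 : 0 < 1 - (1 + 4 * M) * ρ ^ 4 / 16) :
    r ^ 2 = (1 / ρ ^ 2) * (1 - ρ ^ 2 / 2 + (1 + 4 * M) * ρ ^ 4 / 16) ∧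
    r ^ 2 + 1 - M / r ^ 2
      = (1 / ρ ^ 2) * (1 - (1 + 4 * M) * ρ ^ 4 / 16) ^ 2 *
          (1 - ρ ^ 2 / 2 + (1 + 4 * M) * ρ ^ 4 / 16)⁻¹ :=
  schw_ads_fg_coordinate_n4_general M r ρ hr h1 hρdef
end
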